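/- Let φ be the sigmoid function. For every u ∈ ℝ and every ε > 0, there exist c > 0 and σ₀ > 0 such that for all σ ≥ σ₀: β₂(u,σ) − α₂(u,σ)²/(u² + 1) ≥ c · σ^{−(3+ε)}, i.e., E_{z∼N(u,1)}[φ'(σ·z)²·z²] − (E_{z∼N(u,1)}[φ'(σ·z)·z²])²/(u²+1) ≥ c·σ^{−(3+ε)}. -/

import Mathlib

/-!
For large `σ` the weight `φ'(σz)` concentrates on `|z| ≲ 1/σ`. Since `φ'(x)·x² ≤ 2` for all `x`,
`α₂(u,σ) ≤ 2/σ²`, so the subtracted term is `O(σ⁻⁴)`. On the other hand, on `z ∈ [1/(2σ), 1/σ]`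
we have `φ'(σz) ≥ φ'(1)`, `z² ≥ 1/(4σ²)`, and the density of `N(u,1)` is bounded below, so
`β₂(u,σ) ≳ σ⁻³`. Hence the difference is `≳ σ⁻³ ≥ σ^{-(3+ε)}` for `σ ≥ 1`.
-/

open MeasureTheory ProbabilityTheory

/-- The sigmoid function `φ(x) = 1/(1 + exp(−x))`. -/
noncomputable def phi (x : ℝ) : ℝ := 1 / (1 + Real.exp (-x))

/-- The derivative of the sigmoid, `φ' = φ(1−φ)`. -/
noncomputable def phi' (x : ℝ) : ℝ := phi x * (1 - phi x)

/-- `α_q(u,σ) = E_{z∼N(u,1)}[φ'(σ·z)·z^q]`. -/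
noncomputable def alphaQ (q : ℕ) (u σ : ℝ) : ℝ :=
  ∫ z, phi' (σ * z) * z ^ q ∂(gaussianReal u 1)

/-- `β_q(u,σ) = E_{z∼N(u,1)}[φ'(σ·z)²·z^q]`. -/
noncomputable def betaQ (q : ℕ) (u σ : ℝ) : ℝ :=
  ∫ z, (phi' (σ * z)) ^ 2 * z ^ q ∂(gaussianReal u 1)

open Real

lemma phi'_eq_inv_cosh (x : ℝ) : phi' x = (2 * (1 + cosh x))⁻¹ := by
  have hx : exp x * exp (-x) = 1 := by rw [← exp_add, add_neg_cancel, exp_zero]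
  have : 0 < exp (-x) := exp_pos _
  rw [phi', phi, cosh_eq]
  field_simp
  nlinarith

lemma phi'_pos (x : ℝ) : 0 < phi' x := by
  rw [phi'_eq_inv_cosh]
  have := cosh_pos x
  positivity

lemma phi'_le_quarter (x : ℝ) : phi' x ≤ 1 / 4 := by
  rw [phi'_eq_inv_cosh, one_div]
  gcongr
  linarith [one_le_cosh x]

lemma phi'_one_le_of_abs_le_one {x : ℝ} (hx : |x| ≤ 1) : phi' 1 ≤ phi' x := by
  rw [phi'_eq_inv_cosh, phi'_eq_inv_cosh]
  have := cosh_pos x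
  gcongr
  exact cosh_le_cosh.mpr (by simpa using hx)

lemma phi'_mul_sq_le_two (x : ℝ) : phi' x * x ^ 2 ≤ 2 := by
  have hexp : x ^ 2 ≤ 2 * exp |x| := by
    have := quadratic_le_exp_of_nonneg (abs_nonneg x)
    rw [sq_abs] at this
    linarith [abs_nonneg x]
  have hcosh : exp |x| ≤ 2 * cosh x := by
    rw [← cosh_abs, cosh_eq]
    linarith [exp_pos (-|x|)]
  have := cosh_pos x
  rw [phi'_eq_inv_cosh, inv_mul_le_iff₀ (by positivity)]
  linarith

@[fun_prop]
lemma continuous_phi' : Continuous phi' := by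
  simp_rw [funext phi'_eq_inv_cosh]
  exact Continuous.inv₀ (by fun_prop) fun x => by have := cosh_pos x; positivity

lemma phi'_mul_mul_sq_le {σ : ℝ} (hσ : σ ≠ 0) (z : ℝ) :
    phi' (σ * z) * z ^ 2 ≤ 2 / σ ^ 2 := by
  rw [le_div_iff₀ (by positivity)]
  linarith [phi'_mul_sq_le_two (σ * z)]

section Integrability

variable (μ : Measure ℝ) [IsFiniteMeasure μ] {σ : ℝ}

lemma integrable_phi'_mul_mul_sq (hσ : σ ≠ 0) :
    Integrable (fun z => phi' (σ * z) * z ^ 2) μ := by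
  refine Integrable.mono' (integrable_const (2 / σ ^ 2)) (by fun_prop) (ae_of_all _ fun z => ?_)
  rw [Real.norm_of_nonneg (by have := phi'_pos (σ * z); positivity)]
  exact phi'_mul_mul_sq_le hσ z

lemma integrable_phi'_sq_mul_mul_sq (hσ : σ ≠ 0) :
    Integrable (fun z => phi' (σ * z) ^ 2 * z ^ 2) μ := by
  refine Integrable.mono' (integrable_phi'_mul_mul_sq μ hσ) (by fun_prop)
    (ae_of_all _ fun z => ?_)
  have h0 := phi'_pos (σ * z)
  have h1 := phi'_le_quarter (σ * z)
  rw [Real.norm_of_nonneg (by positivity)]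
  gcongr
  nlinarith

end Integrability

lemma gaussianPDFReal_le_of_abs_sub_le {m x y : ℝ} (v : NNReal) (h : |x - m| ≤ |y - m|) :
    gaussianPDFReal m v y ≤ gaussianPDFReal m v x := by
  rw [gaussianPDFReal, gaussianPDFReal]
  gcongr (√(2 * π * v))⁻¹ * rexp (-?_ / (2 * v))
  exact sq_le_sq.mpr h

lemma mul_volume_real_le_gaussianReal_real (m : ℝ) {v : NNReal} (hv : v ≠ 0) {s : Set ℝ}
    (hs : MeasurableSet s) (hs_fin : volume s ≠ ⊤) {c : ℝ}
    (hc : ∀ x ∈ s, c ≤ gaussianPDFReal m v x) :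
    c * volume.real s ≤ (gaussianReal m v).real s := by
  rw [measureReal_def (gaussianReal m v), gaussianReal_apply_eq_integral m hv,
    ENNReal.toReal_ofReal (setIntegral_nonneg hs fun x _ => gaussianPDFReal_nonneg m v x)]
  exact setIntegral_ge_of_const_le_real hs hs_fin hc (integrable_gaussianPDFReal m v).integrableOn

lemma alphaQ_two_nonneg (u σ : ℝ) : 0 ≤ alphaQ 2 u σ :=
  integral_nonneg fun z => by have := phi'_pos (σ * z); positivity

lemma alphaQ_two_le (u : ℝ) {σ : ℝ} (hσ : σ ≠ 0) : alphaQ 2 u σ ≤ 2 / σ ^ 2 := by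
  have := integral_mono (integrable_phi'_mul_mul_sq (gaussianReal u 1) hσ)
    (integrable_const _)
    (phi'_mul_mul_sq_le hσ)
  simpa [alphaQ] using this

lemma betaQ_two_ge (u : ℝ) {σ : ℝ} (hσ : 1 ≤ σ) :
    phi' 1 ^ 2 * gaussianPDFReal u 1 (u + (1 + |u|)) / 8 / σ ^ 3 ≤ betaQ 2 u σ := by
  have hσ0 : 0 < σ := by linarith
  set s := Set.Icc (1 / (2 * σ)) (1 / σ)
  have hs_len : volume.real s = 1 / (2 * σ) := by
    rw [Real.volume_real_Icc_of_le (by gcongr; linarith)]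
    field_simp
    ring
  have hpdf : ∀ x ∈ s, gaussianPDFReal u 1 (u + (1 + |u|)) ≤ gaussianPDFReal u 1 x := by
    rintro x ⟨hx0, hx1⟩
    have hx1' : x ≤ 1 := hx1.trans (by rw [div_le_one hσ0]; exact hσ)
    have hx0' : 0 ≤ x := le_trans (by positivity) hx0
    refine gaussianPDFReal_le_of_abs_sub_le 1 ?_
    rw [add_sub_cancel_left, abs_of_nonneg (by positivity : (0 : ℝ) ≤ 1 + |u|), abs_le]
    constructor <;> linarith [neg_abs_le u, le_abs_self u]
  have hintegrand : ∀ z ∈ s, phi' 1 ^ 2 * (1 / (2 * σ)) ^ 2 ≤ phi' (σ * z) ^ 2 * z ^ 2 := by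
    rintro z ⟨hz0, hz1⟩
    have hz0' : 0 ≤ z := le_trans (by positivity) hz0
    have hσz : |σ * z| ≤ 1 := by
      rw [abs_of_nonneg (by positivity), ← le_div_iff₀' hσ0]
      exact hz1
    have := phi'_pos 1
    gcongr
    exact phi'_one_le_of_abs_le_one hσz
  have hmass := mul_volume_real_le_gaussianReal_real u one_ne_zero measurableSet_Icc
    measure_Icc_lt_top.ne hpdf
  have hset := setIntegral_ge_of_const_le_real (μ := gaussianReal u 1) measurableSet_Icc
    (measure_ne_top _ _) hintegrand
    (integrable_phi'_sq_mul_mul_sq (gaussianReal u 1) hσ0.ne').integrableOn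
  have hle := setIntegral_le_integral (s := s)
    (integrable_phi'_sq_mul_mul_sq (gaussianReal u 1) hσ0.ne')
    (ae_of_all _ fun z => by positivity)
  have := phi'_pos 1
  calc phi' 1 ^ 2 * gaussianPDFReal u 1 (u + (1 + |u|)) / 8 / σ ^ 3
      = phi' 1 ^ 2 * (1 / (2 * σ)) ^ 2 * (gaussianPDFReal u 1 (u + (1 + |u|)) * volume.real s) := by
        rw [hs_len]; field_simp; ring
    _ ≤ phi' 1 ^ 2 * (1 / (2 * σ)) ^ 2 * (gaussianReal u 1).real s := by gcongr
    _ ≤ betaQ 2 u σ := hset.trans hle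

theorem stmt_10 (u : ℝ) (ε : ℝ) (hε : 0 < ε) :
    ∃ c > 0, ∃ σ₀ > 0, ∀ σ : ℝ, σ₀ ≤ σ →
      betaQ 2 u σ - (alphaQ 2 u σ) ^ 2 / (u ^ 2 + 1) ≥ c * σ ^ (-(3 + ε)) := by
  set c := phi' 1 ^ 2 * gaussianPDFReal u 1 (u + (1 + |u|)) / 8
  have hc : 0 < c := by
    have := phi'_pos 1
    have := gaussianPDFReal_pos u 1 (u + (1 + |u|)) one_ne_zero
    positivity
  refine ⟨c / 2, by positivity, max 1 (8 / c), by positivity, fun σ hσ => ?_⟩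
  have hσ1 : 1 ≤ σ := le_of_max_le_left hσ
  have hσc : 8 ≤ c * σ := (div_le_iff₀' hc).mp (le_of_max_le_right hσ)
  have hσ0 : 0 < σ := by linarith
  have hβ : c / σ ^ 3 ≤ betaQ 2 u σ := betaQ_two_ge u hσ1
  have hα : alphaQ 2 u σ ^ 2 / (u ^ 2 + 1) ≤ c / 2 / σ ^ 3 :=
    calc alphaQ 2 u σ ^ 2 / (u ^ 2 + 1) ≤ alphaQ 2 u σ ^ 2 :=
          div_le_self (sq_nonneg _) (le_add_of_nonneg_left (sq_nonneg u))
      _ ≤ (2 / σ ^ 2) ^ 2 := by gcongr; exacts [alphaQ_two_nonneg u σ, alphaQ_two_le u hσ0.ne']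
      _ ≤ c / 2 / σ ^ 3 := by
          rw [div_pow, div_le_div_iff₀ (by positivity) (by positivity)]
          nlinarith [pow_pos hσ0 7]
  have hrpow : σ ^ (-(3 + ε)) ≤ (σ ^ 3)⁻¹ := by
    rw [← Real.rpow_natCast, ← Real.rpow_neg hσ0.le]
    exact Real.rpow_le_rpow_of_exponent_le hσ1 (by push_cast; linarith)
  calc c / 2 * σ ^ (-(3 + ε)) ≤ c / 2 / σ ^ 3 := by
        rw [div_eq_mul_inv (c / 2)]; gcongr
    _ ≤ _ := by linarith [show c / σ ^ 3 = 2 * (c / 2 / σ ^ 3) by ring]
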